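/- arXiv:2509.08807 — 3 statements merged into one kernel-verified Lean document; each statement's English description precedes it below -/
import Mathlib

section
/- Linear combination of block-encoded matrices: if each A_j is (alpha_j, a, epsilon_j)-block-encoded by a unitary U_j, and (P_L, P_R) is a state-preparation pair on b qubits with amplitudes c_j, d_j satisfying sum_j |y_j alpha_j - beta_tilde * conj(c_j) d_j| <= delta (with beta_tilde = sum_j |y_j alpha_j| and conj(c_j) d_j = 0 for j >= m), then the unitary (P_L^dagger ⊗ I)(sum_j |j><j| ⊗ U_j + rest ⊗ I)(P_R ⊗ I) is a (beta_tilde, a+b, delta + sum_j |y_j| epsilon_j)-block-encoding of A = sum_j y_j A_j. -/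
/-! At the joint ancilla state `|0⟩|0⟩` the circuit `(P_L† ⊗ I) SELECT (P_R ⊗ I)` has corner
`∑ j, conj (c j) * d j • G j`, where `G j` is the corner of `U j`; the indices `j ≥ m` drop out
because `conj (c j) * d j = 0` there. Each term of `A - β̃ • ∑ j, conj (c j) * d j • G j` splits as
`y j • (A j - α j • G j) + (y j * α j - β̃ * conj (c j) * d j) • G j`, and `‖G j‖ ≤ 1` since a
compression of a unitary is a contraction, so the triangle inequality gives the error bound.
The circuit is unitary as a product of Kronecker products and a block diagonal of unitaries. -/

open scoped Kronecker

/-- The ℓ²-operator norm of a complex matrix (as a map on Euclidean space). -/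
noncomputable def opNorm {ι : Type*} [Fintype ι] [DecidableEq ι] (M : Matrix ι ι ℂ) : ℝ :=
  ‖Matrix.toEuclideanCLM (𝕜 := ℂ) M‖

/-- The upper-left corner `(⟨0|^{⊗a} ⊗ I) U (|0⟩^{⊗a} ⊗ I)` of a unitary on ancilla × system,
with distinguished ancilla basis state `z`. -/
noncomputable def corner {α ι : Type*} [Fintype α] [Fintype ι] [DecidableEq α] [DecidableEq ι]
    (z : α) (U : Matrix (α × ι) (α × ι) ℂ) : Matrix ι ι ℂ :=
  Matrix.of fun i j => U (z, i) (z, j)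

/-- `U` is an `(a, e)`-block-encoding of `A`: `U` is unitary and
`‖A - a · (⟨0| ⊗ I) U (|0⟩ ⊗ I)‖ ≤ e` in ℓ²-operator norm. -/
def IsBlockEncoding {α ι : Type*} [Fintype α] [Fintype ι] [DecidableEq α] [DecidableEq ι]
    (z : α) (U : Matrix (α × ι) (α × ι) ℂ) (A : Matrix ι ι ℂ) (a e : ℝ) : Prop :=
  U ∈ Matrix.unitaryGroup (α × ι) ℂ ∧ opNorm (A - (a : ℂ) • corner z U) ≤ e

open scoped Matrix.Norms.L2Operator

namespace Matrix

section L2OpNorm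

variable {𝕜 : Type*} [RCLike 𝕜] {l m n o : Type*} [Fintype l] [Fintype m] [Fintype n] [Fintype o]
  [DecidableEq l] [DecidableEq n] [DecidableEq o]

lemma l2_opNorm_one_le : ‖(1 : Matrix n n 𝕜)‖ ≤ 1 := by
  rw [← diagonal_one, l2_opNorm_diagonal]
  exact pi_norm_le_iff_of_nonneg zero_le_one |>.mpr fun _ => by simp

lemma l2_opNorm_le_one_of_conjTranspose_mul_self_eq_one {A : Matrix m n 𝕜}
    (hA : Aᴴ * A = 1) : ‖A‖ ≤ 1 := by
  have h : ‖A‖ * ‖A‖ ≤ 1 := by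
    rw [← l2_opNorm_conjTranspose_mul_self, hA]
    exact l2_opNorm_one_le
  nlinarith [norm_nonneg A]

lemma l2_opNorm_one_submatrix_le [DecidableEq m] {e : n → m} (he : Function.Injective e) :
    ‖(1 : Matrix m m 𝕜).submatrix id e‖ ≤ 1 := by
  refine l2_opNorm_le_one_of_conjTranspose_mul_self_eq_one ?_
  rw [conjTranspose_submatrix, conjTranspose_one, ← submatrix_mul _ _ _ _ _ Function.bijective_id,
    one_mul]
  exact submatrix_one e he

lemma l2_opNorm_submatrix_le [DecidableEq m] (M : Matrix m n 𝕜) {e₁ : l → m} {e₂ : o → n}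
    (he₁ : Function.Injective e₁) (he₂ : Function.Injective e₂) :
    ‖M.submatrix e₁ e₂‖ ≤ ‖M‖ := by
  have hM : M.submatrix e₁ e₂ =
      ((1 : Matrix m m 𝕜).submatrix id e₁)ᴴ * M * (1 : Matrix n n 𝕜).submatrix id e₂ := by
    ext i j
    simp [mul_apply, one_apply]
  calc ‖M.submatrix e₁ e₂‖
      ≤ ‖((1 : Matrix m m 𝕜).submatrix id e₁)ᴴ‖ * ‖M‖ * ‖(1 : Matrix n n 𝕜).submatrix id e₂‖ := by
        rw [hM]
        exact (l2_opNorm_mul _ _).trans (by gcongr; exact l2_opNorm_mul _ _)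
    _ ≤ 1 * ‖M‖ * 1 := by
        rw [l2_opNorm_conjTranspose]
        gcongr
        exacts [l2_opNorm_one_submatrix_le he₁, l2_opNorm_one_submatrix_le he₂]
    _ = ‖M‖ := by ring

end L2OpNorm

section Unitary

variable {R : Type*} [CommRing R] [StarRing R] {m n o : Type*} [Fintype m] [Fintype n]
  [Fintype o] [DecidableEq m] [DecidableEq n] [DecidableEq o]

lemma reindex_mem_unitaryGroup (e : m ≃ n) {M : Matrix m m R} (hM : M ∈ unitaryGroup m R) :
    reindex e e M ∈ unitaryGroup n R := by
  rw [mem_unitaryGroup_iff', reindex_apply, star_eq_conjTranspose, conjTranspose_submatrix,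
    submatrix_mul_equiv, ← star_eq_conjTranspose, hM.1, submatrix_one_equiv]

lemma blockDiagonal_mem_unitaryGroup {W : o → Matrix m m R} (hW : ∀ k, W k ∈ unitaryGroup m R) :
    blockDiagonal W ∈ unitaryGroup (m × o) R := by
  rw [mem_unitaryGroup_iff', star_eq_conjTranspose, blockDiagonal_conjTranspose,
    ← blockDiagonal_mul]
  have hW' : (fun k => (W k)ᴴ * W k) = 1 := funext fun k => mem_unitaryGroup_iff'.mp (hW k)
  rw [hW', blockDiagonal_one]

end Unitary

end Matrix

open Matrix

/-- `∑ k, |k⟩⟨k| ⊗ W k`, the SELECT operator of the LCU construction. -/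
def selectMatrix {β γ R : Type*} [DecidableEq β] [Zero R] (W : β → Matrix γ γ R) :
    Matrix (β × γ) (β × γ) R :=
  of fun p q => if p.1 = q.1 then W p.1 p.2 q.2 else 0

def lcuCircuit {β α ι R : Type*} [Fintype β] [Fintype α] [Fintype ι] [DecidableEq β]
    [DecidableEq α] [DecidableEq ι] [CommRing R] [StarRing R]
    (PL PR : Matrix β β R) (W : β → Matrix (α × ι) (α × ι) R) :
    Matrix ((β × α) × ι) ((β × α) × ι) R :=
  reindex (Equiv.prodAssoc β α ι).symm (Equiv.prodAssoc β α ι).symm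
    ((PLᴴ ⊗ₖ (1 : Matrix (α × ι) (α × ι) R)) * selectMatrix W *
      (PR ⊗ₖ (1 : Matrix (α × ι) (α × ι) R)))

section LCU

variable {β γ α ι R : Type*} [DecidableEq β] [Fintype α] [Fintype ι] [DecidableEq α]
  [DecidableEq ι] [CommRing R]

lemma selectMatrix_eq_reindex_blockDiagonal (W : β → Matrix γ γ R) :
    selectMatrix W = reindex (Equiv.prodComm γ β) (Equiv.prodComm γ β) (blockDiagonal W) := by
  ext ⟨k, s⟩ ⟨l, t⟩
  simp [selectMatrix, blockDiagonal_apply]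

variable [Fintype β] [StarRing R]

lemma selectMatrix_mem_unitaryGroup [Fintype γ] [DecidableEq γ] {W : β → Matrix γ γ R}
    (hW : ∀ k, W k ∈ unitaryGroup γ R) : selectMatrix W ∈ unitaryGroup (β × γ) R := by
  rw [selectMatrix_eq_reindex_blockDiagonal]
  exact reindex_mem_unitaryGroup _ (blockDiagonal_mem_unitaryGroup hW)

lemma lcuCircuit_mem_unitaryGroup {PL PR : Matrix β β R} {W : β → Matrix (α × ι) (α × ι) R}
    (hPL : PL ∈ unitaryGroup β R) (hPR : PR ∈ unitaryGroup β R)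
    (hW : ∀ k, W k ∈ unitaryGroup (α × ι) R) :
    lcuCircuit PL PR W ∈ unitaryGroup ((β × α) × ι) R := by
  have hPLH : PLᴴ ∈ unitaryGroup β R := by
    rw [← star_eq_conjTranspose]
    exact Unitary.star_mem hPL
  refine reindex_mem_unitaryGroup _ (mul_mem (mul_mem ?_ (selectMatrix_mem_unitaryGroup hW)) ?_)
  exacts [kronecker_mem_unitary hPLH (one_mem _), kronecker_mem_unitary hPR (one_mem _)]

end LCU

lemma opNorm_eq_l2_opNorm {ι : Type*} [Fintype ι] [DecidableEq ι] (M : Matrix ι ι ℂ) :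
    opNorm M = ‖M‖ :=
  rfl

lemma l2_opNorm_corner_le_one {α ι : Type*} [Fintype α] [Fintype ι] [DecidableEq α]
    [DecidableEq ι] (z : α) {U : Matrix (α × ι) (α × ι) ℂ}
    (hU : U ∈ unitaryGroup (α × ι) ℂ) : ‖corner z U‖ ≤ 1 :=
  (l2_opNorm_submatrix_le U (Prod.mk_right_injective z) (Prod.mk_right_injective z)).trans
    (l2_opNorm_le_one_of_conjTranspose_mul_self_eq_one (mem_unitaryGroup_iff'.mp hU))

lemma corner_lcuCircuit {β α ι : Type*} [Fintype β] [Fintype α] [Fintype ι]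
    [DecidableEq β] [DecidableEq α] [DecidableEq ι]
    (PL PR : Matrix β β ℂ) (W : β → Matrix (α × ι) (α × ι) ℂ) (z₀ : β) (z : α) :
    corner (z₀, z) (lcuCircuit PL PR W) =
      ∑ k, ((starRingEnd ℂ) (PL k z₀) * PR k z₀) • corner z (W k) := by
  ext i j
  simp only [corner, lcuCircuit, selectMatrix, reindex_apply, submatrix_apply, of_apply,
    Equiv.symm_symm, Equiv.prodAssoc_apply, mul_apply, kroneckerMap_apply, one_apply,
    conjTranspose_apply, Fintype.sum_prod_type, ite_mul, mul_ite, zero_mul, mul_zero,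
    Finset.sum_ite_irrel, Finset.sum_const_zero, Finset.sum_ite_eq, Finset.sum_ite_eq',
    Finset.mem_univ, if_true, Matrix.sum_apply, Matrix.smul_apply, smul_eq_mul, RCLike.star_def]
  refine Finset.sum_congr rfl fun k _ => ?_
  ring

lemma norm_sum_smul_sub_smul_sum_smul_le {ι 𝕜 E : Type*} [NormedField 𝕜]
    [SeminormedAddCommGroup E] [NormedSpace 𝕜 E] (s : Finset ι) (y α w : ι → 𝕜) (β : 𝕜)
    (A G : ι → E) (ε : ι → ℝ) (hA : ∀ j ∈ s, ‖A j - α j • G j‖ ≤ ε j)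
    (hG : ∀ j ∈ s, ‖G j‖ ≤ 1) :
    ‖∑ j ∈ s, y j • A j - β • ∑ j ∈ s, w j • G j‖ ≤
      ∑ j ∈ s, ‖y j * α j - β * w j‖ + ∑ j ∈ s, ‖y j‖ * ε j := by
  have hsplit : ∑ j ∈ s, y j • A j - β • ∑ j ∈ s, w j • G j =
      ∑ j ∈ s, ((y j * α j - β * w j) • G j + y j • (A j - α j • G j)) := by
    rw [Finset.smul_sum, ← Finset.sum_sub_distrib]
    refine Finset.sum_congr rfl fun j _ => ?_
    simp only [smul_sub, sub_smul, smul_smul]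
    abel
  rw [hsplit, ← Finset.sum_add_distrib]
  refine (norm_sum_le _ _).trans (Finset.sum_le_sum fun j hj => ?_)
  calc ‖(y j * α j - β * w j) • G j + y j • (A j - α j • G j)‖
      ≤ ‖y j * α j - β * w j‖ * ‖G j‖ + ‖y j‖ * ‖A j - α j • G j‖ := by
        grw [norm_add_le, norm_smul, norm_smul]
    _ ≤ ‖y j * α j - β * w j‖ * 1 + ‖y j‖ * ε j := by
        gcongr
        exacts [hG j hj, hA j hj]
    _ = ‖y j * α j - β * w j‖ + ‖y j‖ * ε j := by rw [mul_one]

theorem linear_combination_of_block_encodings_general (m a b n : ℕ)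
    (U : Fin (2 ^ b) → Matrix (Fin (2 ^ a) × Fin (2 ^ n)) (Fin (2 ^ a) × Fin (2 ^ n)) ℂ)
    (A : Fin (2 ^ b) → Matrix (Fin (2 ^ n)) (Fin (2 ^ n)) ℂ)
    (y c d : Fin (2 ^ b) → ℂ) (α ε : Fin (2 ^ b) → ℝ) (δ βt : ℝ)
    (PL PR : Matrix (Fin (2 ^ b)) (Fin (2 ^ b)) ℂ)
    (hPL : PL ∈ Matrix.unitaryGroup (Fin (2 ^ b)) ℂ)
    (hPR : PR ∈ Matrix.unitaryGroup (Fin (2 ^ b)) ℂ)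
    (hc : ∀ j, PL j 0 = c j) (hd : ∀ j, PR j 0 = d j)
    (hBE : ∀ j : Fin (2 ^ b), (j : ℕ) < m → IsBlockEncoding (0 : Fin (2 ^ a)) (U j) (A j) (α j) (ε j))
    (hzero : ∀ j : Fin (2 ^ b), m ≤ (j : ℕ) → (starRingEnd ℂ) (c j) * d j = 0)
    (hδ : (∑ j ∈ Finset.univ.filter (fun j : Fin (2 ^ b) => (j : ℕ) < m),
        ‖y j * (α j : ℂ) - (βt : ℂ) * ((starRingEnd ℂ) (c j) * d j)‖) ≤ δ) :
    IsBlockEncoding ((0 : Fin (2 ^ b)), (0 : Fin (2 ^ a)))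
      (Matrix.reindex (Equiv.prodAssoc (Fin (2 ^ b)) (Fin (2 ^ a)) (Fin (2 ^ n))).symm
        (Equiv.prodAssoc (Fin (2 ^ b)) (Fin (2 ^ a)) (Fin (2 ^ n))).symm
        ((PL.conjTranspose ⊗ₖ (1 : Matrix (Fin (2 ^ a) × Fin (2 ^ n)) (Fin (2 ^ a) × Fin (2 ^ n)) ℂ)) *
          (Matrix.of fun p q : Fin (2 ^ b) × (Fin (2 ^ a) × Fin (2 ^ n)) =>
            if p.1 = q.1 then
              (if (p.1 : ℕ) < m then U p.1 p.2 q.2 else if p.2 = q.2 then 1 else 0)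
            else 0) *
          (PR ⊗ₖ (1 : Matrix (Fin (2 ^ a) × Fin (2 ^ n)) (Fin (2 ^ a) × Fin (2 ^ n)) ℂ))))
      (∑ j ∈ Finset.univ.filter (fun j : Fin (2 ^ b) => (j : ℕ) < m), y j • A j)
      βt
      (δ + ∑ j ∈ Finset.univ.filter (fun j : Fin (2 ^ b) => (j : ℕ) < m),
        ‖y j‖ * ε j) := by
  set S := Finset.univ.filter (fun j : Fin (2 ^ b) => (j : ℕ) < m)
  set W : Fin (2 ^ b) → Matrix (Fin (2 ^ a) × Fin (2 ^ n)) (Fin (2 ^ a) × Fin (2 ^ n)) ℂ :=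
    fun k => if (k : ℕ) < m then U k else 1 with hW
  have hselect : (Matrix.of fun p q : Fin (2 ^ b) × (Fin (2 ^ a) × Fin (2 ^ n)) =>
      if p.1 = q.1 then
        (if (p.1 : ℕ) < m then U p.1 p.2 q.2 else if p.2 = q.2 then 1 else 0)
      else 0) = selectMatrix W := by
    ext ⟨k, s⟩ ⟨l, t⟩
    by_cases hk : (k : ℕ) < m <;> simp [selectMatrix, hW, hk, one_apply]
  have hW_unitary : ∀ k, W k ∈ unitaryGroup _ ℂ := fun k => by
    by_cases hk : (k : ℕ) < m
    · simpa [hW, hk] using (hBE k hk).1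
    · simp [hW, hk]
  have hcorner : corner (0, 0) (lcuCircuit PL PR W) =
      ∑ j ∈ S, ((starRingEnd ℂ) (c j) * d j) • corner 0 (U j) := by
    rw [corner_lcuCircuit, Finset.sum_filter]
    refine Finset.sum_congr rfl fun k _ => ?_
    by_cases hk : (k : ℕ) < m
    · simp [hW, hk, hc, hd]
    · simp [hc, hd, hzero k (not_lt.mp hk)]
  rw [hselect]
  change IsBlockEncoding _ (lcuCircuit PL PR W) _ _ _
  refine ⟨lcuCircuit_mem_unitaryGroup hPL hPR hW_unitary, ?_⟩
  rw [opNorm_eq_l2_opNorm, hcorner]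
  grw [norm_sum_smul_sub_smul_sum_smul_le S y (fun j => (α j : ℂ)) _ _ A _ ε
    (fun j hj => (hBE j (Finset.mem_filter.mp hj).2).2)
    (fun j hj => l2_opNorm_corner_le_one 0 (hBE j (Finset.mem_filter.mp hj).2).1), hδ]

/-- Linear combination of block-encoded matrices: if each `A j` (for `j < m`) is
`(α j, a, ε j)`-block-encoded by `U j`, and `(P_L, P_R)` is a state-preparation pair on
`b` qubits with `P_L |0⟩ = ∑ j, c j |j⟩`, `P_R |0⟩ = ∑ j, d j |j⟩`, such that
`∑_{j<m} |y j · α j - β̃ · conj (c j) · d j| ≤ δ` (with `β̃ = ∑_{j<m} |y j · α j|`) and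
`conj (c j) · d j = 0` for `j ≥ m`, then
`(P_L† ⊗ I)(∑_{j<m} |j⟩⟨j| ⊗ U j + ∑_{j≥m} |j⟩⟨j| ⊗ I)(P_R ⊗ I)`
is a `(β̃, a + b, δ + ∑_{j<m} |y j| ε j)`-block-encoding of `A = ∑_{j<m} y j • A j`. -/
theorem linear_combination_of_block_encodings (m a b n : ℕ) (hm : m ≤ 2 ^ b)
    (U : Fin (2 ^ b) → Matrix (Fin (2 ^ a) × Fin (2 ^ n)) (Fin (2 ^ a) × Fin (2 ^ n)) ℂ)
    (A : Fin (2 ^ b) → Matrix (Fin (2 ^ n)) (Fin (2 ^ n)) ℂ)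
    (y c d : Fin (2 ^ b) → ℂ) (α ε : Fin (2 ^ b) → ℝ) (δ βt : ℝ)
    (PL PR : Matrix (Fin (2 ^ b)) (Fin (2 ^ b)) ℂ)
    (hPL : PL ∈ Matrix.unitaryGroup (Fin (2 ^ b)) ℂ)
    (hPR : PR ∈ Matrix.unitaryGroup (Fin (2 ^ b)) ℂ)
    (hc : ∀ j, PL j 0 = c j) (hd : ∀ j, PR j 0 = d j)
    (hBE : ∀ j : Fin (2 ^ b), (j : ℕ) < m → IsBlockEncoding (0 : Fin (2 ^ a)) (U j) (A j) (α j) (ε j))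
    (hzero : ∀ j : Fin (2 ^ b), m ≤ (j : ℕ) → (starRingEnd ℂ) (c j) * d j = 0)
    (hβ : βt = ∑ j ∈ Finset.univ.filter (fun j : Fin (2 ^ b) => (j : ℕ) < m),
        ‖y j * (α j : ℂ)‖)
    (hδ : (∑ j ∈ Finset.univ.filter (fun j : Fin (2 ^ b) => (j : ℕ) < m),
        ‖y j * (α j : ℂ) - (βt : ℂ) * ((starRingEnd ℂ) (c j) * d j)‖) ≤ δ) :
    IsBlockEncoding ((0 : Fin (2 ^ b)), (0 : Fin (2 ^ a)))
      (Matrix.reindex (Equiv.prodAssoc (Fin (2 ^ b)) (Fin (2 ^ a)) (Fin (2 ^ n))).symm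
        (Equiv.prodAssoc (Fin (2 ^ b)) (Fin (2 ^ a)) (Fin (2 ^ n))).symm
        ((PL.conjTranspose ⊗ₖ (1 : Matrix (Fin (2 ^ a) × Fin (2 ^ n)) (Fin (2 ^ a) × Fin (2 ^ n)) ℂ)) *
          (Matrix.of fun p q : Fin (2 ^ b) × (Fin (2 ^ a) × Fin (2 ^ n)) =>
            if p.1 = q.1 then
              (if (p.1 : ℕ) < m then U p.1 p.2 q.2 else if p.2 = q.2 then 1 else 0)
            else 0) *
          (PR ⊗ₖ (1 : Matrix (Fin (2 ^ a) × Fin (2 ^ n)) (Fin (2 ^ a) × Fin (2 ^ n)) ℂ))))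
      (∑ j ∈ Finset.univ.filter (fun j : Fin (2 ^ b) => (j : ℕ) < m), y j • A j)
      βt
      (δ + ∑ j ∈ Finset.univ.filter (fun j : Fin (2 ^ b) => (j : ℕ) < m),
        ‖y j‖ * ε j) :=
  linear_combination_of_block_encodings_general m a b n U A y c d α ε δ βt PL PR hPL hPR hc hd hBE
    hzero hδ
end

section
/- Hierarchy block-encoding composition: let A be a 2^{m+n} x 2^{m+n} matrix partitioned into 2^m x 2^m blocks A_{I,I'} each of size 2^n x 2^n. Suppose U_L and U_R^dagger form a block-encoding pair for the matrix of block Frobenius norms (|A_{I,I'}|_F), and each U_{I,I'} is a (|A_{I,I'}|_F, a, 0)-block-encoding of A_{I,I'}. Then the composite unitary U_A = (U_R^dagger ⊗ I)(prod_{I,I'} C_{I,I'}-U_{I,I'})(U_L ⊗ I), where C_{I,I'}-U_{I,I'} applies U_{I,I'} controlled on the index registers being |I,I'>, is a (|A|_F, m+a+1, 0)-block-encoding of A, i.e. <0|^{⊗(m+1)} <I'| <0|^{⊗a} <J'| U_A |0>^{⊗(m+1)} |I> |0>^{⊗a} |J> = A_{I,I';J,J'} / |A|_F. -/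
open scoped Kronecker

/-- Frobenius norm of a complex matrix. -/
noncomputable def frob {ι κ' : Type*} [Fintype ι] [Fintype κ'] (M : Matrix ι κ' ℂ) : ℝ :=
  Real.sqrt (∑ i, ∑ j, ‖M i j‖ ^ 2)

/-- Frobenius norm `|A_{I,I'}|_F` of the `(I, I')` block of a
`2^m·2^n × 2^m·2^n` matrix, where `A_{I,I';J,J'} = A (I,J) (I',J')`. -/
noncomputable def blockNorm (m n : ℕ)
    (A : Matrix (Fin (2 ^ m) × Fin (2 ^ n)) (Fin (2 ^ m) × Fin (2 ^ n)) ℂ)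
    (I I' : Fin (2 ^ m)) : ℝ :=
  frob (Matrix.of fun J J' : Fin (2 ^ n) => A (I, J) (I', J'))

/-- Column norm `|A_{I'}|_F = sqrt (∑_I |A_{I,I'}|_F²)`. -/
noncomputable def colNorm (m n : ℕ)
    (A : Matrix (Fin (2 ^ m) × Fin (2 ^ n)) (Fin (2 ^ m) × Fin (2 ^ n)) ℂ)
    (I' : Fin (2 ^ m)) : ℝ :=
  Real.sqrt (∑ I, blockNorm m n A I I' ^ 2)

/-!
Multiplying out the Kronecker products, the entry of `U_A` is a sum over the intermediate
basis states `(p, q, r)` of the index registers. Applied to `|0,0,I⟩`, `U_L` only reaches states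
with `p = I, q = 0`, and `⟨0,0,I'| U_R†` only sees `|I,0,r⟩` for `r = I'`, so the sum collapses to
the single path through `|I,0,I'⟩`. Its amplitude telescopes:
`(|A_{I,I'}|_F / |A_{I'}|_F) · (A_{I,I';J,J'} / |A_{I,I'}|_F) · (|A_{I'}|_F / |A|_F) = A_{I,I';J,J'} / |A|_F`,
also when one of the norms vanishes, because then the entry `A_{I,I';J,J'}` vanishes too.
-/

open Matrix

section Select

variable {R α β : Type*} [CommSemiring R] [Fintype α] [Fintype β] [DecidableEq α] [DecidableEq β]

theorem kronecker_one_mul_select_mul_kronecker_one_apply (P Q : Matrix α α R)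
    (S : α → Matrix β β R) (x y : α) (u v : β) :
    ((P ⊗ₖ (1 : Matrix β β R)) * (Matrix.of fun p q : α × β =>
        if p.1 = q.1 then S p.1 p.2 q.2 else 0) * (Q ⊗ₖ (1 : Matrix β β R))) (x, u) (y, v)
      = ∑ k, P x k * S k u v * Q k y := by
  simp [Matrix.mul_apply, Fintype.sum_prod_type, Matrix.one_apply]

end Select

theorem div_mul_div_mul_div_cancel₀ {K : Type*} [Field K] {a b c f : K} (hb : b = 0 → a = 0)
    (hc : c = 0 → a = 0) : b / c * (a / b) * (c / f) = a / f := by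
  by_cases hb0 : b = 0
  · simp [hb0, hb hb0]
  by_cases hc0 : c = 0
  · simp [hc0, hc hc0]
  field_simp

theorem Real.sqrt_sum_eq_zero_iff {ι : Type*} [Fintype ι] {f : ι → ℝ} (hf : ∀ i, 0 ≤ f i) :
    Real.sqrt (∑ i, f i) = 0 ↔ ∀ i, f i = 0 := by
  rw [Real.sqrt_eq_zero (Finset.sum_nonneg fun i _ => hf i)]
  simp [Finset.sum_eq_zero_iff_of_nonneg fun i _ => hf i]

theorem frob_eq_zero_iff {ι κ : Type*} [Fintype ι] [Fintype κ] {M : Matrix ι κ ℂ} :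
    frob M = 0 ↔ M = 0 := by
  rw [frob, Real.sqrt_sum_eq_zero_iff fun i => Finset.sum_nonneg fun j _ => by positivity]
  simp [Finset.sum_eq_zero_iff_of_nonneg, ← Matrix.ext_iff]

section BlockNorms

variable {m n : ℕ} {A : Matrix (Fin (2 ^ m) × Fin (2 ^ n)) (Fin (2 ^ m) × Fin (2 ^ n)) ℂ}

theorem blockNorm_eq_zero_iff {I I' : Fin (2 ^ m)} :
    blockNorm m n A I I' = 0 ↔ ∀ J J', A (I, J) (I', J') = 0 := by
  simp [blockNorm, frob_eq_zero_iff, ← Matrix.ext_iff]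

theorem colNorm_eq_zero_iff {I' : Fin (2 ^ m)} :
    colNorm m n A I' = 0 ↔ ∀ I, blockNorm m n A I I' = 0 := by
  rw [colNorm, Real.sqrt_sum_eq_zero_iff fun I => sq_nonneg _]
  simp

end BlockNorms

theorem hierarchy_block_encoding_general (m n a : ℕ)
    (A : Matrix (Fin (2 ^ m) × Fin (2 ^ n)) (Fin (2 ^ m) × Fin (2 ^ n)) ℂ)
    (U : Fin (2 ^ m) → Fin (2 ^ m) →
      Matrix (Fin (2 ^ a) × Fin (2 ^ n)) (Fin (2 ^ a) × Fin (2 ^ n)) ℂ)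
    (UL UR : Matrix (Fin (2 ^ m) × Fin 2 × Fin (2 ^ m)) (Fin (2 ^ m) × Fin 2 × Fin (2 ^ m)) ℂ)
    (hUL : ∀ (I p : Fin (2 ^ m)) (q : Fin 2) (r : Fin (2 ^ m)),
      UL (p, q, r) (0, 0, I)
        = if p = I ∧ q = 0 then ((colNorm m n A r / frob A : ℝ) : ℂ) else 0)
    (hUR : ∀ I I' K : Fin (2 ^ m),
      UR.conjTranspose (0, 0, K) (I, 0, I')
        = if K = I' then ((blockNorm m n A I I' / colNorm m n A I' : ℝ) : ℂ) else 0)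
    (hUe : ∀ (I I' : Fin (2 ^ m)) (J J' : Fin (2 ^ n)),
      (U I I') ((0 : Fin (2 ^ a)), J') ((0 : Fin (2 ^ a)), J)
        = A (I, J) (I', J') / ((blockNorm m n A I I' : ℝ) : ℂ)) :
    ∀ (I I' : Fin (2 ^ m)) (J J' : Fin (2 ^ n)),
      ((UR.conjTranspose ⊗ₖ (1 : Matrix (Fin (2 ^ a) × Fin (2 ^ n)) (Fin (2 ^ a) × Fin (2 ^ n)) ℂ)) *
          (Matrix.of fun p q :
              (Fin (2 ^ m) × Fin 2 × Fin (2 ^ m)) × (Fin (2 ^ a) × Fin (2 ^ n)) =>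
            if p.1 = q.1 then U p.1.1 p.1.2.2 p.2 q.2 else 0) *
          (UL ⊗ₖ (1 : Matrix (Fin (2 ^ a) × Fin (2 ^ n)) (Fin (2 ^ a) × Fin (2 ^ n)) ℂ)))
        ((0, 0, I'), ((0 : Fin (2 ^ a)), J')) ((0, 0, I), ((0 : Fin (2 ^ a)), J))
        = A (I, J) (I', J') / ((frob A : ℝ) : ℂ) := by
  intro I I' J J'
  have hblock : blockNorm m n A I I' = 0 → A (I, J) (I', J') = 0 := fun h =>
    blockNorm_eq_zero_iff.mp h J J'
  refine (kronecker_one_mul_select_mul_kronecker_one_apply URᴴ UL (fun k => U k.1 k.2.2)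
    _ _ _ _).trans ?_
  simp only [Fintype.sum_prod_type, hUL, hUR, hUe, mul_ite, mul_zero, ite_mul, zero_mul, ite_and,
    Finset.sum_ite_irrel, Finset.sum_const_zero, Finset.sum_ite_eq', Finset.sum_ite_eq,
    Finset.mem_univ, if_true]
  push_cast
  exact div_mul_div_mul_div_cancel₀ (fun h => hblock (by exact_mod_cast h))
    fun h => hblock (colNorm_eq_zero_iff.mp (by exact_mod_cast h) I)

/-- Hierarchy block-encoding composition.  `A` is a `2^{m+n} × 2^{m+n}` matrix partitioned
into `2^m × 2^m` blocks `A_{I,I'}` of size `2^n × 2^n`.  `U_L` and `U_R†` form a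
block-encoding pair for the matrix of block Frobenius norms:
`U_L |0,0,I⟩ = |I,0⟩ ∑_{I'} (|A_{I'}|_F/|A|_F)|I'⟩` and the `⟨0,0,·|` components of
`U_R† |I,0,I'⟩` are `(|A_{I,I'}|_F/|A_{I'}|_F)|0,0,I'⟩` (hypotheses `hUL`, `hUR`); and each
`U I I'` is a `(|A_{I,I'}|_F, a, 0)`-block-encoding of `A_{I,I'}` (hypothesis `hUe`).
Then the composite `U_A = (U_R† ⊗ I)(∏_{I,I'} C_{I,I'}-U_{I,I'})(U_L ⊗ I)` — where the
product of controlled gates applies `U I I'` when the two index registers read `(I, I')`,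
written below as a single controlled-select matrix — is a `(|A|_F, m+a+1, 0)`-block-encoding
of `A`: `⟨0^{m+1}, I', 0^a, J'| U_A |0^{m+1}, I, 0^a, J⟩ = A_{I,I';J,J'} / |A|_F`. -/
theorem hierarchy_block_encoding (m n a : ℕ)
    (A : Matrix (Fin (2 ^ m) × Fin (2 ^ n)) (Fin (2 ^ m) × Fin (2 ^ n)) ℂ)
    (U : Fin (2 ^ m) → Fin (2 ^ m) →
      Matrix (Fin (2 ^ a) × Fin (2 ^ n)) (Fin (2 ^ a) × Fin (2 ^ n)) ℂ)
    (UL UR : Matrix (Fin (2 ^ m) × Fin 2 × Fin (2 ^ m)) (Fin (2 ^ m) × Fin 2 × Fin (2 ^ m)) ℂ)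
    (hULu : UL ∈ Matrix.unitaryGroup (Fin (2 ^ m) × Fin 2 × Fin (2 ^ m)) ℂ)
    (hURu : UR ∈ Matrix.unitaryGroup (Fin (2 ^ m) × Fin 2 × Fin (2 ^ m)) ℂ)
    (hUu : ∀ I I', U I I' ∈ Matrix.unitaryGroup (Fin (2 ^ a) × Fin (2 ^ n)) ℂ)
    (hUL : ∀ (I p : Fin (2 ^ m)) (q : Fin 2) (r : Fin (2 ^ m)),
      UL (p, q, r) (0, 0, I)
        = if p = I ∧ q = 0 then ((colNorm m n A r / frob A : ℝ) : ℂ) else 0)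
    (hUR : ∀ I I' K : Fin (2 ^ m),
      UR.conjTranspose (0, 0, K) (I, 0, I')
        = if K = I' then ((blockNorm m n A I I' / colNorm m n A I' : ℝ) : ℂ) else 0)
    (hUe : ∀ (I I' : Fin (2 ^ m)) (J J' : Fin (2 ^ n)),
      (U I I') ((0 : Fin (2 ^ a)), J') ((0 : Fin (2 ^ a)), J)
        = A (I, J) (I', J') / ((blockNorm m n A I I' : ℝ) : ℂ)) :
    ∀ (I I' : Fin (2 ^ m)) (J J' : Fin (2 ^ n)),
      ((UR.conjTranspose ⊗ₖ (1 : Matrix (Fin (2 ^ a) × Fin (2 ^ n)) (Fin (2 ^ a) × Fin (2 ^ n)) ℂ)) *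
          (Matrix.of fun p q :
              (Fin (2 ^ m) × Fin 2 × Fin (2 ^ m)) × (Fin (2 ^ a) × Fin (2 ^ n)) =>
            if p.1 = q.1 then U p.1.1 p.1.2.2 p.2 q.2 else 0) *
          (UL ⊗ₖ (1 : Matrix (Fin (2 ^ a) × Fin (2 ^ n)) (Fin (2 ^ a) × Fin (2 ^ n)) ℂ)))
        ((0, 0, I'), ((0 : Fin (2 ^ a)), J')) ((0, 0, I), ((0 : Fin (2 ^ a)), J))
        = A (I, J) (I', J') / ((frob A : ℝ) : ℂ) :=
  hierarchy_block_encoding_general m n a A U UL UR hUL hUR hUe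
end

section
/- The kernel reflection polynomial K_{1/kappa, l}(x) = (2*T_l((-2*kappa^2*x^2 + kappa^2 + 1)/(kappa^2 - 1)) + 2)/(T_l((kappa^2+1)/(kappa^2-1)) + 1) - 1 satisfies |K_{1/kappa,l}(x)| <= 1 for all x in [-1, 1], where T_l is the l-th Chebyshev polynomial of the first kind and kappa > 1. -/
open Polynomial Real

/-!
For `x ∈ [-1, 1]` the argument `(-2κ²x² + κ² + 1)/(κ² - 1)` lies in `[-1, b]` with
`b = (κ² + 1)/(κ² - 1) ≥ 1`. On `[-1, 1]` the values of `T_l` lie in `[-1, 1]`, and on `[1, ∞)`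
`T_l` is increasing with `T_l ≥ 1`, so `T_l` of the argument lies in `[-1, M]`, `M = T_l b`. The map
`t ↦ 2(t + 1)/(M + 1) - 1` sends `[-1, M]` onto `[-1, 1]`.
-/

namespace Polynomial.Chebyshev

/-- On `[1, ∞)` we have `T_n (cosh θ) = cosh (n θ)` with `θ = arcosh x ≥ 0`, and `cosh` is
monotone on `[0, ∞)`. -/
theorem eval_T_real_le_eval_T_real_of_one_le (n : ℤ) {x y : ℝ} (hx : 1 ≤ x) (hxy : x ≤ y) :
    (T ℝ n).eval x ≤ (T ℝ n).eval y := by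
  have hy : 1 ≤ y := hx.trans hxy
  rw [← cosh_arcosh hx, ← cosh_arcosh hy, T_real_cosh, T_real_cosh, cosh_le_cosh, abs_mul,
    abs_mul, abs_of_nonneg (arcosh_nonneg hx), abs_of_nonneg (arcosh_nonneg hy)]
  gcongr
  exact (arcosh_le_arcosh (by linarith) (by linarith)).2 hxy

theorem eval_T_real_mem_Icc_of_le (n : ℤ) {x y : ℝ} (hx : -1 ≤ x) (hxy : x ≤ y) (hy : 1 ≤ y) :
    (T ℝ n).eval x ∈ Set.Icc (-1) ((T ℝ n).eval y) := by
  rcases le_or_gt x 1 with hx1 | hx1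
  · obtain ⟨hlo, hhi⟩ := eval_T_real_mem_Icc n ⟨hx, hx1⟩
    exact ⟨hlo, hhi.trans (one_le_eval_T_real n hy)⟩
  · exact ⟨by linarith [one_le_eval_T_real n hx1.le],
      eval_T_real_le_eval_T_real_of_one_le n hx1.le hxy⟩

end Polynomial.Chebyshev

theorem abs_two_mul_add_two_div_add_one_sub_one_le_one {t M : ℝ} (ht : -1 ≤ t) (htM : t ≤ M) :
    |(2 * t + 2) / (M + 1) - 1| ≤ 1 := by
  rcases eq_or_lt_of_le (ht.trans htM) with hM | hM
  · simp [← hM] -- `M = -1`: the division by zero yields `|-1| = 1`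
  have hM1 : 0 < M + 1 := by linarith
  rw [abs_le, le_sub_iff_add_le, sub_le_iff_le_add, le_div_iff₀ hM1, div_le_iff₀ hM1]
  constructor <;> linarith

section ReflectionArgument

variable {c x : ℝ}

theorem one_le_add_one_div_sub_one (hc : 1 < c) : 1 ≤ (c + 1) / (c - 1) := by
  rw [le_div_iff₀ (by linarith)]
  linarith

theorem neg_one_le_reflection_arg (hc : 1 < c) (hx : x ∈ Set.Icc (-1 : ℝ) 1) :
    -1 ≤ (-2 * c * x ^ 2 + c + 1) / (c - 1) := by
  have hx2 : x ^ 2 ≤ 1 := by nlinarith [hx.1, hx.2]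
  rw [le_div_iff₀ (by linarith)]
  nlinarith

theorem reflection_arg_le (hc : 1 < c) :
    (-2 * c * x ^ 2 + c + 1) / (c - 1) ≤ (c + 1) / (c - 1) := by
  gcongr
  nlinarith [sq_nonneg x]

end ReflectionArgument

theorem kernel_reflection_polynomial_bounded_general (κ : ℝ) (hκ : 1 < κ) (l : ℕ)
    (x : ℝ) (hx : x ∈ Set.Icc (-1 : ℝ) 1) :
    |(2 * (Polynomial.Chebyshev.T ℝ l).eval
          ((-2 * κ ^ 2 * x ^ 2 + κ ^ 2 + 1) / (κ ^ 2 - 1)) + 2) /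
        ((Polynomial.Chebyshev.T ℝ l).eval ((κ ^ 2 + 1) / (κ ^ 2 - 1)) + 1) - 1| ≤ 1 := by
  have hc : 1 < κ ^ 2 := by nlinarith
  obtain ⟨hlo, hhi⟩ := Polynomial.Chebyshev.eval_T_real_mem_Icc_of_le l
    (neg_one_le_reflection_arg hc hx) (reflection_arg_le hc) (one_le_add_one_div_sub_one hc)
  exact abs_two_mul_add_two_div_add_one_sub_one_le_one hlo hhi

/-- The kernel reflection polynomial
`K_{1/κ, l}(x) = (2 T_l((-2κ²x² + κ² + 1)/(κ² - 1)) + 2)/(T_l((κ²+1)/(κ²-1)) + 1) - 1`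
satisfies `|K_{1/κ,l}(x)| ≤ 1` for all `x ∈ [-1, 1]`, where `T_l` is the `l`-th
Chebyshev polynomial of the first kind and `κ > 1`, `l ≥ 1`. -/
theorem kernel_reflection_polynomial_bounded (κ : ℝ) (hκ : 1 < κ) (l : ℕ) (hl : 0 < l)
    (x : ℝ) (hx : x ∈ Set.Icc (-1 : ℝ) 1) :
    |(2 * (Polynomial.Chebyshev.T ℝ l).eval
          ((-2 * κ ^ 2 * x ^ 2 + κ ^ 2 + 1) / (κ ^ 2 - 1)) + 2) /
        ((Polynomial.Chebyshev.T ℝ l).eval ((κ ^ 2 + 1) / (κ ^ 2 - 1)) + 1) - 1| ≤ 1 :=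
  kernel_reflection_polynomial_bounded_general κ hκ l x hx
end
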